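/- arXiv:2310.19147 — 2 statements merged into one kernel-verified Lean document; each statement's English description precedes it below -/
import Mathlib

section
/- Let F : [0,1] → [0,1] be nondecreasing right-continuous with F(t) the probability of signal arrival by time t, and let u : [0,1] → ℝ be bounded measurable. Then the continuation value U(t) = ∫_t^{T} u(t') dF_t(t') + (1 − F_t(T))·u_T, where F_t(t') = (F(t') − F(t))/(1 − F(t)) and F(t) < 1 for t < T, is continuous in t at every continuity point of F and of u. -/
/-! The integral term changes by at most `C * ν (Ioc a b) = C * |F b - F a|` when its lower
endpoint moves from `a` to `b`, so it is continuous wherever `F` is; the denominator `1 - F t`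
does not vanish. -/

open MeasureTheory Set Filter Topology

section

variable {ν : Measure ℝ} [IsFiniteMeasure ν] {E : Type*} [NormedAddCommGroup E] [NormedSpace ℝ E]
  {u : ℝ → E} {C : ℝ}

theorem measureReal_Ioc_eq_sub_measureReal_Iic {a b : ℝ} (hab : a ≤ b) :
    ν.real (Ioc a b) = ν.real (Iic b) - ν.real (Iic a) := by
  rw [← Iic_sdiff_Iic, measureReal_sdiff (Iic_subset_Iic.2 hab) measurableSet_Iic]

theorem dist_setIntegral_Ioc_le (hu : AEStronglyMeasurable u ν) (hC : ∀ x, ‖u x‖ ≤ C)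
    (a b T : ℝ) :
    dist (∫ x in Ioc a T, u x ∂ν) (∫ x in Ioc b T, u x ∂ν) ≤
      C * |ν.real (Iic a) - ν.real (Iic b)| := by
  wlog hab : a ≤ b generalizing a b
  · rw [dist_comm, abs_sub_comm]
    exact this b a (le_of_not_ge hab)
  have hsub : Ioc b T ⊆ Ioc a T := Ioc_subset_Ioc_left hab
  have hdiff : Ioc a T \ Ioc b T ⊆ Ioc a b := fun x ⟨⟨hax, hxT⟩, hx⟩ =>
    ⟨hax, not_lt.1 fun hbx => hx ⟨hbx, hxT⟩⟩
  rw [dist_eq_norm, ← setIntegral_sdiff measurableSet_Ioc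
    ((Integrable.of_bound hu C (.of_forall hC)).integrableOn) hsub]
  calc ‖∫ x in Ioc a T \ Ioc b T, u x ∂ν‖
      ≤ C * ν.real (Ioc a T \ Ioc b T) :=
        norm_setIntegral_le_of_norm_le_const (measure_lt_top ν _) fun x _ => hC x
    _ ≤ C * ν.real (Ioc a b) :=
        mul_le_mul_of_nonneg_left (measureReal_mono hdiff) ((norm_nonneg _).trans (hC 0))
    _ = C * |ν.real (Iic a) - ν.real (Iic b)| := by
        rw [measureReal_Ioc_eq_sub_measureReal_Iic hab, abs_sub_comm,
          abs_of_nonneg (sub_nonneg.2 (measureReal_mono (Iic_subset_Iic.2 hab)))]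

theorem continuousAt_setIntegral_Ioc_left (hu : AEStronglyMeasurable u ν) (hC : ∀ x, ‖u x‖ ≤ C)
    (T : ℝ) {t : ℝ} (hF : ContinuousAt (fun s => ν.real (Iic s)) t) :
    ContinuousAt (fun s => ∫ x in Ioc s T, u x ∂ν) t := by
  rw [ContinuousAt, tendsto_iff_dist_tendsto_zero]
  have hlim : Tendsto (fun s => C * |ν.real (Iic s) - ν.real (Iic t)|) (𝓝 t) (𝓝 0) := by
    simpa using ((hF.sub_const (ν.real (Iic t))).abs.const_mul C)
  exact squeeze_zero (fun _ => dist_nonneg) (fun s => dist_setIntegral_Ioc_le hu hC s t T) hlim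

end

theorem continuation_value_continuous (ν : Measure ℝ) [IsProbabilityMeasure ν]
    (u : ℝ → ℝ) (hu_meas : Measurable u) (hu_bdd : ∃ C, ∀ t, |u t| ≤ C)
    (uT T : ℝ)
    (F : ℝ → ℝ) (hF : ∀ t, F t = (ν (Set.Iic t)).toReal)
    (U : ℝ → ℝ)
    (hU : ∀ t, U t =
      ((∫ t' in Set.Ioc t T, u t' ∂ν) + (1 - F T) * uT) / (1 - F t)) :
    ∀ t < T, F t < 1 → ContinuousAt F t → ContinuousAt u t → ContinuousAt U t := by
  intro t _ hFt hcF _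
  obtain ⟨C, hC⟩ := hu_bdd
  have hF_eq : F = fun s => ν.real (Iic s) := funext hF
  have hintegral : ContinuousAt (fun s => ∫ x in Ioc s T, u x ∂ν) t :=
    continuousAt_setIntegral_Ioc_left hu_meas.aestronglyMeasurable hC T (hF_eq ▸ hcF)
  rw [show U = _ from funext hU]
  exact (hintegral.add continuousAt_const).div (continuousAt_const.sub hcF) (sub_ne_zero.2 hFt.ne')
end

section
/- Fix λ > 0, c > 0 with c < λ. For the solution V(p) = k(1−p) + (λ − c + c(1−p)log((1−p)/p))/λ of the HJB with r̄₁ = 1 and boundary condition V(c/λ) = 1 − c/λ (value-matching at the stopping belief), we have V'(c/λ) = −1. -/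
/-!
Away from `p ∈ {0, 1}` the explicit `V` solves the HJB equation
`V' λ p (1 - p) = -c + λ p (1 - V)` for every `k`. At the stopping belief `p = c/λ` we have
`λ p = c`, so value matching `V = 1 - p` turns the right-hand side into `-c (1 - p)` and the
left-hand side into `V' c (1 - p)`; hence `V' = -1`.
-/

open Real

noncomputable def goodNewsValue (lam c k p : ℝ) : ℝ :=
  k * (1 - p) + (lam - c + c * (1 - p) * log ((1 - p) / p)) / lam

section

variable {lam c k p : ℝ}

theorem hasDerivAt_log_one_sub_div_self (hp0 : p ≠ 0) (hp1 : p ≠ 1) :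
    HasDerivAt (fun q : ℝ => log ((1 - q) / q)) (-(p * (1 - p))⁻¹) p := by
  have h1p : 1 - p ≠ 0 := sub_ne_zero.2 (Ne.symm hp1)
  have hquot : HasDerivAt (fun q : ℝ => (1 - q) / q) (-(p ^ 2)⁻¹) p := by
    refine (((hasDerivAt_id p).const_sub 1).div (hasDerivAt_id p) hp0).congr_deriv ?_
    simp only [id]
    field_simp
    ring
  refine (hquot.log (div_ne_zero h1p hp0)).congr_deriv ?_
  field_simp

theorem hasDerivAt_goodNewsValue (hp0 : p ≠ 0) (hp1 : p ≠ 1) :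
    HasDerivAt (goodNewsValue lam c k) (-k - c / lam * (log ((1 - p) / p) + 1 / p)) p := by
  have hlin : HasDerivAt (fun q : ℝ => 1 - q) (-1) p := (hasDerivAt_id p).const_sub 1
  have hlog := hasDerivAt_log_one_sub_div_self hp0 hp1
  have h := (hlin.const_mul k).add
    ((((hlin.const_mul c).mul hlog).const_add (lam - c)).div_const lam)
  refine h.congr_deriv ?_
  field_simp
  ring

theorem goodNewsValue_hjb (hlam : lam ≠ 0) (hp0 : p ≠ 0) (hp1 : p ≠ 1) {V' : ℝ}
    (hV : HasDerivAt (goodNewsValue lam c k) V' p) :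
    V' * (lam * p * (1 - p)) = -c + lam * p * (1 - goodNewsValue lam c k p) := by
  rw [hV.unique (hasDerivAt_goodNewsValue hp0 hp1), goodNewsValue]
  field_simp
  ring

theorem eq_neg_one_of_hjb_of_value_matching {V V' : ℝ} (hlam : lam ≠ 0) (hc : c ≠ 0)
    (hclam : c ≠ lam)
    (hjb : V' * (lam * (c / lam) * (1 - c / lam)) = -c + lam * (c / lam) * (1 - V))
    (hmatch : V = 1 - c / lam) : V' = -1 := by
  have hstop : lam * (c / lam) = c := mul_div_cancel₀ c hlam
  have h1p : 1 - c / lam ≠ 0 :=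
    sub_ne_zero.2 fun h => hclam (by rwa [eq_comm, div_eq_one_iff_eq hlam] at h)
  rw [hmatch, hstop] at hjb
  apply mul_left_cancel₀ (mul_ne_zero hc h1p)
  linear_combination hjb

end

theorem smooth_pasting (lam c k : ℝ) (hlam : 0 < lam) (hc : 0 < c) (hclam : c < lam)
    (hk : k * (1 - c / lam) +
        (lam - c + c * (1 - c / lam) * Real.log ((1 - c / lam) / (c / lam))) / lam =
      1 - c / lam) :
    HasDerivAt (fun p : ℝ =>
        k * (1 - p) + (lam - c + c * (1 - p) * Real.log ((1 - p) / p)) / lam)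
      (-1) (c / lam) := by
  have hp0 : c / lam ≠ 0 := div_ne_zero hc.ne' hlam.ne'
  have hp1 : c / lam ≠ 1 := ((div_lt_one hlam).2 hclam).ne
  have hV := hasDerivAt_goodNewsValue (lam := lam) (c := c) (k := k) hp0 hp1
  exact hV.congr_deriv <| eq_neg_one_of_hjb_of_value_matching hlam.ne' hc.ne' hclam.ne
    (goodNewsValue_hjb hlam.ne' hp0 hp1 hV) hk
end
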